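/- If a₁...aₙ is the m-th word in the full Gray code of words of length n, then (n−1) + a₁ + a₂ + ... + aₙ ≡ m (mod 2). -/

import Mathlib

/-- The full Gray code of words: for `n = 0` the single empty word; words of
the length-`n` code at even (0-indexed, i.e. odd 1-indexed) positions are
extended by last letters `1, 2, …, 2(n+1)-1` in increasing order, those at odd
(0-indexed) positions by the same last letters in decreasing order. -/
def grayCode : ℕ → List (List ℕ)
  | 0 => [[]]
  | n+1 =>
      (((grayCode n).zipIdx.map Prod.swap).map (fun p =>
        if p.1 % 2 = 0 then
          (List.range (2*n + 1)).map (fun j => p.2 ++ [j + 1])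
        else
          ((List.range (2*n + 1)).map (fun j => p.2 ++ [j + 1])).reverse)).flatten

/-- The 1-indexed `i`-th letter of a word. -/
def wd (a : List ℕ) (i : ℕ) : ℕ := a.getD (i - 1) 0

/-- A word `a₁…aₙ` is arc-disconnected if there is a `k ≥ 2` with
`a_k = 2k-1` and `a_j ≥ 2k-1` for all `j > k`. -/
def ArcDiscL (a : List ℕ) : Prop :=
  ∃ k, 2 ≤ k ∧ k ≤ a.length ∧ wd a k = 2*k - 1 ∧
    ∀ j, k < j → j ≤ a.length → 2*k - 1 ≤ wd a j


theorem List.getElem?_flatten_mul_add {α : Type*} {L : List (List α)} {c : ℕ}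
    (hL : ∀ l ∈ L, l.length = c) (i : ℕ) {j : ℕ} (hj : j < c) :
    L.flatten[i * c + j]? = L[i]?.bind (·[j]?) := by
  induction L generalizing i with
  | nil => simp
  | cons l L ih =>
    have hl : l.length = c := hL l List.mem_cons_self
    rw [List.flatten_cons]
    cases i with
    | zero => simp [List.getElem?_append_left (hl ▸ hj)]
    | succ i =>
      rw [List.getElem?_append_right (by rw [hl]; nlinarith), hl,
        show (i + 1) * c + j - c = i * c + j by rw [add_mul]; omega]
      exact ih (fun l' hl' => hL l' (List.mem_cons_of_mem _ hl')) i

def grayExtensions (n p : ℕ) (w : List ℕ) : List (List ℕ) :=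
  if p % 2 = 0 then (List.range (2*n + 1)).map (fun j => w ++ [j + 1])
  else ((List.range (2*n + 1)).map (fun j => w ++ [j + 1])).reverse

theorem grayCode_succ (n : ℕ) :
    grayCode (n + 1) =
      (((grayCode n).zipIdx.map Prod.swap).map (fun q => grayExtensions n q.1 q.2)).flatten :=
  rfl

theorem length_grayExtensions (n p : ℕ) (w : List ℕ) :
    (grayExtensions n p w).length = 2*n + 1 := by
  unfold grayExtensions; split <;> simp

theorem getElem?_grayExtensions (n p : ℕ) (w : List ℕ) {j : ℕ} (hj : j < 2*n + 1) :
    (grayExtensions n p w)[j]? = some (w ++ [if p % 2 = 0 then j + 1 else 2*n + 1 - j]) := by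
  unfold grayExtensions
  split
  · simp [hj]
  · rw [List.getElem?_reverse (by simpa using hj), List.length_map, List.length_range,
      List.getElem?_map, List.getElem?_range (by omega), Option.map_some]
    congr 3
    omega

theorem getElem?_grayCode_succ (n p : ℕ) {j : ℕ} (hj : j < 2*n + 1) :
    (grayCode (n + 1))[p * (2*n + 1) + j]? =
      (grayCode n)[p]?.map (· ++ [if p % 2 = 0 then j + 1 else 2*n + 1 - j]) := by
  rw [grayCode_succ, List.getElem?_flatten_mul_add _ p hj]
  · cases h : (grayCode n)[p]? <;> simp [List.getElem?_zipIdx, h, getElem?_grayExtensions n p _ hj]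
  · simp only [List.mem_map]
    rintro _ ⟨q, -, rfl⟩
    exact length_grayExtensions n q.1 q.2

theorem grayCode_parity (n m₀ : ℕ) (a : List ℕ) (ha : (grayCode n)[m₀]? = some a) :
    (n + a.sum) % 2 = m₀ % 2 := by
  induction n generalizing m₀ a with
  | zero =>
    cases m₀ <;> simp_all [grayCode]
  | succ n ih =>
    obtain ⟨p, j, hj, rfl⟩ : ∃ p j, j < 2*n + 1 ∧ m₀ = p * (2*n + 1) + j :=
      ⟨m₀ / (2*n + 1), m₀ % (2*n + 1), Nat.mod_lt _ (by omega), (Nat.div_add_mod' _ _).symm⟩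
    rw [getElem?_grayCode_succ n p hj, Option.map_eq_some_iff] at ha
    obtain ⟨w, hw, rfl⟩ := ha
    -- Mod 2 the index `p(2n+1) + j` is `p + j`, and both possible new letters are `j + 1`.
    have hp := ih p w hw
    have hmul : p * (2*n + 1) = 2*(p*n) + p := by ring
    split_ifs <;> simp only [List.sum_append, List.sum_cons, List.sum_nil] <;> omega

/-- If `a` is the `m`-th word (1-indexed; here it sits at
0-indexed position `m - 1`, i.e. 0-indexed position `m₀` corresponds to
`m = m₀ + 1`) of the full Gray code of words of length `n`, then
`(n-1) + a₁ + ⋯ + aₙ ≡ m (mod 2)`. -/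
theorem stmt_11 (n : ℕ) (hn : 1 ≤ n) (m₀ : ℕ) (a : List ℕ)
    (ha : (grayCode n)[m₀]? = some a) :
    (n - 1 + a.sum) ≡ m₀ + 1 [MOD 2] := by
  have := grayCode_parity n m₀ a ha
  unfold Nat.ModEq
  omega
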